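/- Let G=(V,E) be a connected finite loopless multigraph whose minimum degree δ(G) cannot be expressed in the form 2p·μ(G)−q for any two integers p and q satisfying q ≥ 0 and p > μ(G)+⌊(q−1)/2⌋. Then for every odd set U ⊆ V one has 2|E(U)| + 2|F(U)| ≥ (|U|+1)(δ(G)−μ(G)+1); equivalently, Φ(G) ≥ δ(G)−μ(G)+1. -/

import Mathlib

open Finset

variable {V E : Type} [Fintype V] [DecidableEq V] [Fintype E]

/-- A multigraph given by an incidence map `ends : E → Sym2 V` is loopless if no edge is a loop. -/
def Loopless (ends : E → Sym2 V) : Prop := ∀ e : E, ¬ (ends e).IsDiag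

/-- The degree of a vertex: the number of edges incident with it. -/
def mDegree (ends : E → Sym2 V) (v : V) : ℕ :=
  (univ.filter fun e => v ∈ ends e).card

/-- The minimum degree δ(G). -/
noncomputable def minDegree (ends : E → Sym2 V) : ℕ :=
  sInf (Set.range (mDegree ends))

/-- The maximum degree Δ(G). -/
noncomputable def maxDegree (ends : E → Sym2 V) : ℕ :=
  sSup (Set.range (mDegree ends))

/-- The maximum multiplicity μ(G) of an edge. -/
noncomputable def maxMultiplicity (ends : E → Sym2 V) : ℕ :=
  sSup (Set.range fun e : E => (univ.filter fun f : E => ends f = ends e).card)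

/-- `E(U)`: the set of edges with both ends in `U`. -/
def edgesIn (ends : E → Sym2 V) (U : Finset V) : Finset E :=
  univ.filter fun e => ∀ v ∈ ends e, v ∈ U

/-- `E⁺(U)`: the set of edges with at least one end in `U`. -/
def edgesPlus (ends : E → Sym2 V) (U : Finset V) : Finset E :=
  univ.filter fun e => ∃ v ∈ ends e, v ∈ U

/-- `F(U)`: the set of edges with exactly one end in `U`. -/
def edgesF (ends : E → Sym2 V) (U : Finset V) : Finset E :=
  univ.filter fun e => (∃ v ∈ ends e, v ∈ U) ∧ ¬ ∀ v ∈ ends e, v ∈ U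

/-- `E(X,Y)`: the set of edges with one end in `X` and the other end in `Y`. -/
def edgesBetween (ends : E → Sym2 V) (X Y : Finset V) : Finset E :=
  univ.filter fun e => ∃ x ∈ X, ∃ y ∈ Y, ends e = s(x, y)

/-- An odd set: a vertex set of odd size at least 3. -/
def IsOddSet (U : Finset V) : Prop := 3 ≤ U.card ∧ Odd U.card

/-- A proper edge coloring: each vertex is incident with at most one edge of each color. -/
def IsProperEdgeColoring (ends : E → Sym2 V) {k : ℕ} (c : E → Fin k) : Prop :=
  ∀ v : V, ∀ e f : E, v ∈ ends e → v ∈ ends f → c e = c f → e = f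

/-- The chromatic index χ'(G). -/
noncomputable def chromaticIndex (ends : E → Sym2 V) : ℕ :=
  sInf {k : ℕ | ∃ c : E → Fin k, IsProperEdgeColoring ends c}

/-- A cover coloring: each vertex is incident with at least one edge of each color. -/
def IsCoverColoring (ends : E → Sym2 V) {k : ℕ} (c : E → Fin k) : Prop :=
  ∀ (v : V) (i : Fin k), ∃ e : E, v ∈ ends e ∧ c e = i

/-- The cover index ξ(G). -/
noncomputable def coverIndex (ends : E → Sym2 V) : ℕ :=
  sSup {k : ℕ | ∃ c : E → Fin k, IsCoverColoring ends c}

/-- The density Γ(G) = max over odd sets U of 2|E(U)|/(|U|-1). -/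
noncomputable def density (ends : E → Sym2 V) : ℝ :=
  sSup {x : ℝ | ∃ U : Finset V, IsOddSet U ∧
    x = 2 * (edgesIn ends U).card / ((U.card : ℝ) - 1)}

/-- The co-density Φ(G) = min over odd sets U of 2|E⁺(U)|/(|U|+1). -/
noncomputable def codensity (ends : E → Sym2 V) : ℝ :=
  sInf {x : ℝ | ∃ U : Finset V, IsOddSet U ∧
    x = 2 * (edgesPlus ends U).card / ((U.card : ℝ) + 1)}

/-- The simple graph on `V` whose adjacency relation is "joined by at least one edge";
the multigraph is connected iff this graph is connected. -/
def supportGraph (ends : E → Sym2 V) : SimpleGraph V where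
  Adj x y := x ≠ y ∧ ∃ e : E, ends e = s(x, y)
  symm := by
    constructor
    rintro x y ⟨hxy, e, he⟩
    exact ⟨hxy.symm, e, by rw [he, Sym2.eq_swap]⟩
  loopless := by constructor; rintro x ⟨hxx, -⟩; exact hxx rfl


section Aux

variable {V E : Type} [Fintype V] [DecidableEq V] [Fintype E]

lemma aux_ends_rep (ends : E → Sym2 V) (hG : Loopless ends) (e : E) :
    ∃ x y : V, x ≠ y ∧ ends e = s(x, y) := by
  obtain ⟨⟨x, y⟩, h⟩ := Quot.exists_rep (ends e)
  refine ⟨x, y, ?_, h.symm⟩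
  intro hxy
  apply hG e
  rw [← h, hxy]
  exact Sym2.mk_isDiag_iff.mpr rfl

lemma aux_filter_pair_card (U : Finset V) (x y : V) (hxy : x ≠ y) :
    (U.filter (fun v => v = x ∨ v = y)).card
      = (if x ∈ U then 1 else 0) + (if y ∈ U then 1 else 0) := by
  rw [Finset.filter_or, Finset.filter_eq' U x, Finset.filter_eq' U y]
  by_cases hx : x ∈ U <;> by_cases hy : y ∈ U <;>
    simp only [hx, hy, if_true, if_false, Finset.union_empty, Finset.empty_union,
      Finset.card_singleton, Finset.card_empty]
  have : ({x} : Finset V) ∪ {y} = {x, y} := rfl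
  rw [this, Finset.card_pair hxy]

/-- Handshake: sum of degrees over `U` equals `2|E(U)| + |F(U)|`. -/
lemma aux_handshake (ends : E → Sym2 V) (hG : Loopless ends) (U : Finset V) :
    ∑ v ∈ U, mDegree ends v
      = 2 * (edgesIn ends U).card + (edgesF ends U).card := by
  classical
  have key : ∀ e : E, (U.filter (fun v => v ∈ ends e)).card
      = (if e ∈ edgesIn ends U then 2 else 0)
        + (if e ∈ edgesF ends U then 1 else 0) := by
    intro e
    obtain ⟨x, y, hxy, he⟩ := aux_ends_rep ends hG e
    have hmem : ∀ v : V, v ∈ ends e ↔ v = x ∨ v = y := by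
      intro v; rw [he]; exact Sym2.mem_iff
    have hin : e ∈ edgesIn ends U ↔ (x ∈ U ∧ y ∈ U) := by
      simp only [edgesIn, Finset.mem_filter, Finset.mem_univ, true_and]
      constructor
      · intro h
        exact ⟨h x ((hmem x).mpr (Or.inl rfl)), h y ((hmem y).mpr (Or.inr rfl))⟩
      · rintro ⟨hx, hy⟩ v hv
        rcases (hmem v).mp hv with rfl | rfl
        · exact hx
        · exact hy
    have hF : e ∈ edgesF ends U ↔ ((x ∈ U ∨ y ∈ U) ∧ ¬(x ∈ U ∧ y ∈ U)) := by
      simp only [edgesF, Finset.mem_filter, Finset.mem_univ, true_and]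
      constructor
      · rintro ⟨⟨v, hv, hvU⟩, hnot⟩
        constructor
        · rcases (hmem v).mp hv with rfl | rfl
          · exact Or.inl hvU
          · exact Or.inr hvU
        · intro ⟨hx, hy⟩
          apply hnot
          intro w hw
          rcases (hmem w).mp hw with rfl | rfl
          · exact hx
          · exact hy
      · rintro ⟨hor, hnand⟩
        constructor
        · rcases hor with hx | hy
          · exact ⟨x, (hmem x).mpr (Or.inl rfl), hx⟩
          · exact ⟨y, (hmem y).mpr (Or.inr rfl), hy⟩
        · intro h
          exact hnand ⟨h x ((hmem x).mpr (Or.inl rfl)), h y ((hmem y).mpr (Or.inr rfl))⟩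
    have : U.filter (fun v => v ∈ ends e) = U.filter (fun v => v = x ∨ v = y) := by
      apply Finset.filter_congr
      intro v _; simp [hmem v]
    rw [this, aux_filter_pair_card U x y hxy]
    by_cases hx : x ∈ U <;> by_cases hy : y ∈ U <;> simp [hx, hy, hin, hF]
  have step1 : ∑ v ∈ U, mDegree ends v
      = ∑ e : E, (U.filter (fun v => v ∈ ends e)).card := by
    simp only [mDegree, Finset.card_filter]
    rw [Finset.sum_comm]
  rw [step1]
  have step2 : ∀ (s : Finset E) (c : ℕ),
      ∑ e : E, (if e ∈ s then c else 0) = c * s.card := by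
    intro s c
    rw [Finset.sum_ite_mem, Finset.univ_inter, Finset.sum_const, smul_eq_mul, mul_comm]
  calc ∑ e : E, (U.filter (fun v => v ∈ ends e)).card
      = ∑ e : E, ((if e ∈ edgesIn ends U then 2 else 0)
          + (if e ∈ edgesF ends U then 1 else 0)) := by
        exact Finset.sum_congr rfl fun e _ => key e
    _ = 2 * (edgesIn ends U).card + (edgesF ends U).card := by
        rw [Finset.sum_add_distrib, step2, step2, one_mul]

lemma aux_mult_le (ends : E → Sym2 V) (e : E) :
    (Finset.univ.filter (fun f : E => ends f = ends e)).card ≤ maxMultiplicity ends := by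
  apply le_csSup
  · exact ⟨Fintype.card E, by rintro _ ⟨f, rfl⟩; exact (Finset.card_filter_le _ _)⟩
  · exact ⟨e, rfl⟩

/-- Edge count within U: `2|E(U)| ≤ μ · |U| · (|U| - 1)`. -/
lemma aux_edgesIn_bound (ends : E → Sym2 V) (hG : Loopless ends) (U : Finset V) :
    2 * (edgesIn ends U).card
      ≤ maxMultiplicity ends * (U.card * U.card - U.card) := by
  classical
  set m := maxMultiplicity ends
  set I := (edgesIn ends U).image ends with hI
  have h1 : (edgesIn ends U).card ≤ m * I.card := by
    apply Finset.card_le_mul_card_image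
    intro b _
    calc ((edgesIn ends U).filter (fun e => ends e = b)).card
        ≤ (Finset.univ.filter (fun e : E => ends e = b)).card := by
          apply Finset.card_le_card
          intro e he
          simp only [Finset.mem_filter] at he ⊢
          exact ⟨Finset.mem_univ e, he.2⟩
      _ ≤ m := by
          rcases Finset.eq_empty_or_nonempty
              (Finset.univ.filter (fun e : E => ends e = b)) with h | ⟨f, hf⟩
          · simp [h]
          · have hfb : ends f = b := (Finset.mem_filter.mp hf).2
            rw [← hfb]
            exact aux_mult_le ends f
  have h2 : 2 * I.card ≤ U.offDiag.card := by
    have := Finset.mul_card_image_le_card_of_maps_to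
      (f := fun z : V × V => s(z.1, z.2))
      (s := U.offDiag.filter (fun z : V × V => s(z.1, z.2) ∈ I))
      (t := I)
      (fun z hz => (Finset.mem_filter.mp hz).2) 2 ?_
    · calc 2 * I.card ≤ (U.offDiag.filter (fun z : V × V => s(z.1, z.2) ∈ I)).card := this
        _ ≤ U.offDiag.card := Finset.card_filter_le _ _
    · intro b hb
      obtain ⟨e, he, hbe⟩ := Finset.mem_image.mp hb
      obtain ⟨x, y, hxy, hxye⟩ := aux_ends_rep ends hG e
      have hxU : x ∈ U ∧ y ∈ U := by
        have := (Finset.mem_filter.mp he).2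
        exact ⟨this x (by rw [hxye]; exact Sym2.mem_mk_left x y),
               this y (by rw [hxye]; exact Sym2.mem_mk_right x y)⟩
      have hb' : b = s(x, y) := by rw [← hbe, hxye]
      have hmem1 : (x, y) ∈ U.offDiag.filter
          (fun z : V × V => s(z.1, z.2) ∈ I) ∧ s((x,y).1, (x,y).2) = b := by
        refine ⟨Finset.mem_filter.mpr ⟨Finset.mem_offDiag.mpr ⟨hxU.1, hxU.2, hxy⟩, ?_⟩, hb'.symm⟩
        rw [← hb']; exact hb
      have hmem2 : (y, x) ∈ U.offDiag.filter
          (fun z : V × V => s(z.1, z.2) ∈ I) ∧ s((y,x).1, (y,x).2) = b := by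
        have hsym : s(y, x) = b := by rw [hb']; exact Sym2.eq_swap
        refine ⟨Finset.mem_filter.mpr ⟨Finset.mem_offDiag.mpr
          ⟨hxU.2, hxU.1, hxy.symm⟩, ?_⟩, hsym⟩
        rw [hsym]; exact hb
      have hpair : ({(x, y), (y, x)} : Finset (V × V)) ⊆
          (U.offDiag.filter (fun z : V × V => s(z.1, z.2) ∈ I)).filter
            (fun z => s(z.1, z.2) = b) := by
        intro z hz
        rcases Finset.mem_insert.mp hz with rfl | hz
        · exact Finset.mem_filter.mpr ⟨hmem1.1, hmem1.2⟩
        · rw [Finset.mem_singleton.mp hz]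
          exact Finset.mem_filter.mpr ⟨hmem2.1, hmem2.2⟩
      calc 2 = ({(x, y), (y, x)} : Finset (V × V)).card := by
            rw [Finset.card_insert_of_notMem (by simp [Prod.ext_iff]; tauto),
              Finset.card_singleton]
        _ ≤ _ := Finset.card_le_card hpair
  calc 2 * (edgesIn ends U).card ≤ 2 * (m * I.card) := by omega
    _ = m * (2 * I.card) := by ring
    _ ≤ m * U.offDiag.card := Nat.mul_le_mul_left m h2
    _ = m * (U.card * U.card - U.card) := by rw [Finset.offDiag_card]

lemma aux_cross (ends : E → Sym2 V) (hconn : (supportGraph ends).Connected)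
    (U : Finset V) (hU : U.Nonempty) (hV : U ≠ Finset.univ) :
    1 ≤ (edgesF ends U).card := by
  classical
  obtain ⟨u, hu⟩ := hU
  have : ∃ w : V, w ∉ U := by
    by_contra h
    push_neg at h
    exact hV (Finset.eq_univ_iff_forall.mpr h)
  obtain ⟨w, hw⟩ := this
  have hwalk : ∀ (a b : V), (supportGraph ends).Walk a b → a ∈ U → b ∉ U →
      (edgesF ends U).Nonempty := by
    intro a b W
    induction W with
    | nil => intro h h'; exact absurd h h'
    | @cons a c b hadj W ih =>
      intro ha hb
      by_cases hc : c ∈ U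
      · exact ih hc hb
      · obtain ⟨hne, e, he⟩ := hadj
        refine ⟨e, ?_⟩
        simp only [edgesF, Finset.mem_filter, Finset.mem_univ, true_and]
        refine ⟨⟨a, by rw [he]; exact Sym2.mem_mk_left a c, ha⟩, ?_⟩
        intro h
        exact hc (h c (by rw [he]; exact Sym2.mem_mk_right a c))
  obtain ⟨e, he⟩ := hwalk u w ((hconn.preconnected u w).some) hu hw
  exact Finset.card_pos.mpr ⟨e, he⟩

end Aux

/-- Let `G` be a connected finite loopless multigraph whose minimum degree
cannot be expressed as `2pμ(G)−q` with `q ≥ 0` and `p > μ(G)+⌊(q−1)/2⌋`. Then for every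
odd set `U` one has `2|E(U)| + 2|F(U)| ≥ (|U|+1)(δ(G)−μ(G)+1)`, i.e.
`Φ(G) ≥ δ(G)−μ(G)+1`. -/
theorem stmt_4
    {V E : Type} [Fintype V] [DecidableEq V] [Fintype E]
    (ends : E → Sym2 V) (hG : Loopless ends)
    (hconn : (supportGraph ends).Connected)
    (hδ : ¬ ∃ p q : ℤ, 0 ≤ q ∧ (maxMultiplicity ends : ℤ) + Int.fdiv (q - 1) 2 < p ∧
      (minDegree ends : ℤ) = 2 * p * (maxMultiplicity ends : ℤ) - q) :
    ∀ U : Finset V, IsOddSet U →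
      ((U.card : ℤ) + 1) * ((minDegree ends : ℤ) - (maxMultiplicity ends : ℤ) + 1) ≤
        2 * ((edgesIn ends U).card : ℤ) + 2 * ((edgesF ends U).card : ℤ) := by
  intro U hUodd
  classical
  obtain ⟨hU3, hUodd'⟩ := hUodd
  -- basic notation
  set dN := minDegree ends with hdN
  set mN := maxMultiplicity ends with hmN
  -- U is nonempty
  have hUne : U.Nonempty := Finset.card_pos.mp (by omega)
  obtain ⟨u0, hu0⟩ := hUne
  -- E is nonempty, else hδ is contradicted
  have hEne : Nonempty E := by
    by_contra hE
    simp only [not_nonempty_iff] at hE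
    have hdeg0 : mDegree ends u0 = 0 := by
      simp [mDegree, Finset.filter_eq_empty_iff]
    have hd0 : dN = 0 := by
      have := Nat.sInf_le (Set.mem_range_self (f := mDegree ends) u0)
      rw [hdeg0] at this
      rw [hdN, minDegree]
      omega
    have hm0 : mN = 0 := by
      have : Set.range (fun e : E => (Finset.univ.filter
          (fun f : E => ends f = ends e)).card) = ∅ := by
        rw [Set.range_eq_empty_iff]; exact ⟨fun e => (hE.false e).elim⟩
      rw [hmN, maxMultiplicity, this, csSup_empty]
      rfl
    apply hδ
    refine ⟨1, 0, le_refl 0, ?_, by rw [hd0, hm0]; norm_num⟩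
    rw [hm0]
    norm_num
    decide
  obtain ⟨e0⟩ := hEne
  -- m ≥ 1
  have hm1 : 1 ≤ mN := by
    have h := aux_mult_le ends e0
    have : 1 ≤ (Finset.univ.filter (fun f : E => ends f = ends e0)).card :=
      Finset.card_pos.mpr ⟨e0, by simp⟩
    omega
  -- degree sum bound
  have hdegsum : U.card * dN ≤ ∑ v ∈ U, mDegree ends v := by
    calc U.card * dN = U.card • dN := by rw [smul_eq_mul]
      _ ≤ ∑ v ∈ U, mDegree ends v := by
        apply Finset.card_nsmul_le_sum
        intro v _
        exact Nat.sInf_le (Set.mem_range_self v)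
  have hhs := aux_handshake ends hG U
  -- integer versions
  set n : ℤ := (U.card : ℤ) with hn
  set d : ℤ := (dN : ℤ) with hd
  set m : ℤ := (mN : ℤ) with hm
  set Ein : ℤ := ((edgesIn ends U).card : ℤ) with hEin
  set F : ℤ := ((edgesF ends U).card : ℤ) with hF
  have hn3 : 3 ≤ n := by rw [hn]; exact_mod_cast hU3
  have hnodd : ∃ t : ℤ, n = 2 * t + 1 := by
    obtain ⟨k, hk⟩ := hUodd'
    exact ⟨(k : ℤ), by rw [hn, hk]; push_cast; ring⟩
  have hm1' : 1 ≤ m := by rw [hm]; exact_mod_cast hm1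
  have h1 : n * d ≤ 2 * Ein + F := by
    have := hdegsum
    rw [hhs] at this
    rw [hn, hd, hEin, hF]
    exact_mod_cast this
  have h2 : 2 * Ein ≤ m * (n * n - n) := by
    have hb := aux_edgesIn_bound ends hG U
    have hcc : U.card ≤ U.card * U.card := Nat.le_mul_of_pos_left _ (by omega)
    rw [hEin, hm, hn]
    push_cast [Nat.cast_sub hcc] at hb ⊢
    exact_mod_cast hb
  have hF0 : 0 ≤ F := by rw [hF]; positivity
  have hEin0 : 0 ≤ Ein := by rw [hEin]; positivity
  -- case analysis on X = d - (n+1)(m-1)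
  rcases lt_trichotomy (d - (n + 1) * (m - 1)) 1 with hX | hX | hX
  · -- X ≤ 0
    linarith [h1, hF0, hX]
  · -- X = 1
    by_cases hUuniv : U = Finset.univ
    · -- U = V : parity argument
      have hFz : F = 0 := by
        rw [hF, hUuniv]
        simp [edgesF]
      obtain ⟨t, ht⟩ := hnodd
      have hX' : d = (n + 1) * (m - 1) + 1 := by linarith
      have he1 : Even (n + 1) := ⟨t + 1, by linarith⟩
      have hd_odd : Odd d := by
        rw [hX']; exact (he1.mul_right (m - 1)).add_one
      have hnd_odd : Odd (n * d) := Odd.mul ⟨t, ht⟩ hd_odd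
      obtain ⟨k, hk⟩ := hnd_odd
      have h1' : 2 * k + 1 ≤ 2 * Ein := by rw [← hk]; linarith [h1, hFz]
      have h1'' : 2 * k + 2 ≤ 2 * Ein := by omega
      have : n * d + 1 ≤ 2 * Ein := by rw [hk]; linarith
      linarith [this, hFz, hX]
    · -- U ≠ V : crossing edge
      have hF1 : 1 ≤ F := by
        rw [hF]
        exact_mod_cast aux_cross ends hconn U ⟨u0, hu0⟩ hUuniv
      linarith [h1, hF1, hX]
  · -- X ≥ 2
    have hX2 : (n + 1) * (m - 1) + 2 ≤ d := by omega
    -- from non-expressibility: d ≥ (n-1)*m + 1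
    have hd_big : (n - 1) * m + 1 ≤ d := by
      by_contra hcon
      push_neg at hcon
      have hdle : d ≤ (n - 1) * m := by omega
      obtain ⟨t, ht⟩ := hnodd
      have hmd : (maxMultiplicity ends : ℤ) = m := by rw [hm, hmN]
      have hdd : (minDegree ends : ℤ) = d := by rw [hd, hdN]
      have hq : 2 * t * m - d ≤ 2 * t - 2 * m := by nlinarith [hX2, ht]
      have hq0 : 0 ≤ 2 * t * m - d := by nlinarith [hdle, ht]
      apply hδ
      refine ⟨t, 2 * t * m - d, hq0, ?_, ?_⟩
      · rw [Int.fdiv_eq_ediv_of_nonneg _ (by norm_num)]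
        generalize hgen : 2 * t * m - d = qq at hq hq0
        omega
      · ring
    have hcert : (0:ℤ) ≤ (n - 1) * (d - (n - 1) * m - 1) :=
      mul_nonneg (by linarith) (by linarith)
    nlinarith [h1, h2, hF0, hm1', hcert]
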